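/- arXiv:1508.03674 — 2 statements merged into one kernel-verified Lean document; each statement's English description precedes it below -/
import Mathlib

section
/- Let π₁, π₂ ∈ S_m. Suppose ρ₁, ρ₂ ∈ S_m are such that ρ₂∘π₁⁻¹ and π₂∘ρ₁⁻¹ are both cyclic. Then there exist α, β ∈ S_m such that α∘ρ₁∘β = π₁ and α⁻¹∘ρ₂∘β⁻¹ = π₂. -/
/-- A permutation is cyclic if it has exactly one orbit. -/
def IsCyclicPerm {m : ℕ} (σ : Equiv.Perm (Fin m)) : Prop :=
  ∀ x y : Fin m, σ.SameCycle x y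

lemma isCyclicPerm_conj {m : ℕ} {σ τ : Equiv.Perm (Fin m)}
    (hσ : IsCyclicPerm σ) (hτ : IsCyclicPerm τ) : IsConj σ τ := by
  by_cases h1 : σ = 1
  · subst h1
    have hsub : ∀ x y : Fin m, x = y := by
      intro x y
      obtain ⟨n, hn⟩ := hσ x y
      simpa using hn
    have : Subsingleton (Fin m) := ⟨hsub⟩
    have : τ = 1 := Subsingleton.elim τ 1
    simp [this]
  · have h2 : τ ≠ 1 := by
      intro h
      subst h
      apply h1
      ext x
      obtain ⟨y, hy⟩ : ∃ y, σ y ≠ y := by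
        by_contra h
        push_neg at h
        exact h1 (Equiv.Perm.ext fun z => by simpa using h z)
      obtain ⟨n, hn⟩ := hτ (σ y) y
      simp only [one_zpow, Equiv.Perm.one_apply] at hn
      exact absurd hn hy
    have key : ∀ ρ : Equiv.Perm (Fin m), IsCyclicPerm ρ → ρ ≠ 1 →
        ρ.cycleType = {m} := by
      intro ρ hρ hρ1
      obtain ⟨x, hx⟩ : ∃ x, ρ x ≠ x := by
        by_contra h
        push_neg at h
        exact hρ1 (Equiv.Perm.ext fun z => by simpa using h z)
      have hc : ρ.IsCycle := ⟨x, hx, fun y _ => hρ x y⟩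
      have hsupp : ρ.support = Finset.univ := by
        apply Finset.eq_univ_of_forall
        intro y
        obtain ⟨n, hn⟩ := hρ x y
        rw [← hn]
        rw [Equiv.Perm.zpow_apply_mem_support, Equiv.Perm.mem_support]
        exact hx
      rw [hc.cycleType, hsupp]
      simp
    rw [Equiv.Perm.isConj_iff_cycleType_eq, key σ hσ h1, key τ hτ h2]

theorem stmt_6 (m : ℕ) (π₁ π₂ ρ₁ ρ₂ : Equiv.Perm (Fin m))
    (h₁ : IsCyclicPerm (ρ₂ * π₁⁻¹)) (h₂ : IsCyclicPerm (π₂ * ρ₁⁻¹)) :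
    ∃ α β : Equiv.Perm (Fin m), α * ρ₁ * β = π₁ ∧ α⁻¹ * ρ₂ * β⁻¹ = π₂ := by
  have hconj : IsConj (π₂ * ρ₁⁻¹) (ρ₂ * π₁⁻¹) := isCyclicPerm_conj h₂ h₁
  rw [isConj_iff] at hconj
  obtain ⟨α, hα⟩ := hconj
  have hα' : α * (ρ₁ * π₂⁻¹) = (π₁ * ρ₂⁻¹) * α := by
    have h := congrArg (·⁻¹) hα
    simp only [mul_inv_rev, inv_inv] at h
    calc α * (ρ₁ * π₂⁻¹) = (α * (ρ₁ * π₂⁻¹) * α⁻¹) * α := by group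
      _ = (π₁ * ρ₂⁻¹) * α := by rw [show α * (ρ₁ * π₂⁻¹) * α⁻¹ = π₁ * ρ₂⁻¹ from by
            rw [← h]; group]
  refine ⟨α, π₂⁻¹ * α⁻¹ * ρ₂, ?_, ?_⟩
  · have : α * ρ₁ * (π₂⁻¹ * α⁻¹ * ρ₂) = (α * (ρ₁ * π₂⁻¹)) * α⁻¹ * ρ₂ := by
      group
    rw [this, hα']
    group
  · group
end

section
/- For every pair of permutations π₁, π₂ ∈ S_m, there exist a 213-avoiding permutation ρ₁ ∈ S_m, a 132-avoiding permutation ρ₂ ∈ S_m, and permutations α, β ∈ S_m such that α∘ρ₁∘β = π₁ and α⁻¹∘ρ₂∘β⁻¹ = π₂. -/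
/-- `σ` contains the pattern 213. -/
def Contains213 {m : ℕ} (σ : Equiv.Perm (Fin m)) : Prop :=
  ∃ i₁ i₂ i₃ : Fin m, i₁ < i₂ ∧ i₂ < i₃ ∧ σ i₂ < σ i₁ ∧ σ i₁ < σ i₃

/-- `σ` contains the pattern 132. -/
def Contains132 {m : ℕ} (σ : Equiv.Perm (Fin m)) : Prop :=
  ∃ i₁ i₂ i₃ : Fin m, i₁ < i₂ ∧ i₂ < i₃ ∧ σ i₁ < σ i₃ ∧ σ i₃ < σ i₂

/-!
Every `h ∈ S_n` admits a 213-avoiding `ρ` with `h * ρ` an `n`-cycle. If `h 0 ≠ 0`, let `ρ` put the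
value `0` at position `0`, followed by a shifted copy of some `σ ∈ S_{n-1}`; then
`h * ρ = swap 0 (h 0) * (e * σ lifted to fix 0)` for some `e ∈ S_{n-1}`, and the transposition glues
`0` into the cycle of `e * σ`, so it suffices to make `e * σ` an `(n-1)`-cycle, recursively. If
`h 0 = 0` then `h (n-1) ≠ 0`, and the same works with the value `n-1` at position `0`. Prepending
an extreme value preserves 213-avoidance, and conjugating by the reversal turns 213 into 132.

Now pick a 213-avoiding `ρ₁` and a 132-avoiding `ρ₂` such that `π₂⁻¹ ρ₁` and `ρ₂⁻¹ π₁` are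
`m`-cycles. They are conjugate, `γ (π₂⁻¹ ρ₁) γ⁻¹ = ρ₂⁻¹ π₁`, and `α = ρ₂ γ π₂⁻¹`, `β = γ⁻¹` work.
-/

open Equiv Equiv.Perm Set

namespace Equiv.Perm

variable {α β : Type*}

theorem isCycleOn_univ_iff {f : Perm α} : f.IsCycleOn univ ↔ ∀ x y, f.SameCycle x y := by
  simp [IsCycleOn, bijOn_univ, f.bijective]

theorem SameCycle.map_of_sameCycle_apply [Finite α] {f : Perm α} {g : Perm β} {φ : α → β}
    (hstep : ∀ x, g.SameCycle (φ x) (φ (f x))) {x y : α} (h : f.SameCycle x y) :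
    g.SameCycle (φ x) (φ y) := by
  obtain ⟨k, rfl⟩ := h.exists_nat_pow_eq
  clear h
  induction k with
  | zero => exact .rfl
  | succ k ih => exact ih.trans (by rw [pow_succ', mul_apply]; exact hstep _)

theorem isConj_of_isCycleOn_univ [Fintype α] [DecidableEq α] {f g : Perm α}
    (hf : f.IsCycleOn univ) (hg : g.IsCycleOn univ) : IsConj f g := by
  rcases (univ : Set α).subsingleton_or_nontrivial with hs | hs
  · have : Subsingleton α := subsingleton_univ_iff.1 hs
    exact Subsingleton.elim f g ▸ IsConj.refl f
  have isCycle {f : Perm α} (hf : f.IsCycleOn univ) : f.IsCycle :=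
    isCycle_iff_exists_isCycleOn.2 ⟨_, hs, hf, fun _ _ => trivial⟩
  have support_eq {f : Perm α} (hf : f.IsCycleOn univ) : f.support = Finset.univ :=
    Finset.eq_univ_of_forall fun x => mem_support.2 (hf.apply_ne hs trivial)
  exact (isCycle hf).isConj (isCycle hg) (by rw [support_eq hf, support_eq hg])

variable {n : ℕ}

theorem decomposeFin_symm_mul_decomposeFin_symm_zero (p : Fin (n + 1)) (e σ : Perm (Fin n)) :
    decomposeFin.symm (p, e) * decomposeFin.symm (0, σ) = decomposeFin.symm (p, e * σ) := by
  ext x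
  refine Fin.cases ?_ (fun x => ?_) x <;> simp

/-- Left multiplication by `swap 0 p` glues the fixed point `0` into the cycle through `p`. -/
theorem isCycleOn_univ_decomposeFin_symm {p : Fin (n + 1)} (hp : p ≠ 0) {e : Perm (Fin n)}
    (he : e.IsCycleOn univ) : (decomposeFin.symm (p, e)).IsCycleOn univ := by
  set π := decomposeFin.symm (p, e)
  have step (x : Fin (n + 1)) : π.SameCycle x (π x) := sameCycle_apply_right.2 .rfl
  have zero_p : π.SameCycle 0 p := by simpa [π] using step 0
  have succ_succ (x : Fin n) : π.SameCycle x.succ (e x).succ := by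
    by_cases hx : (e x).succ = p
    · have hx0 : π x.succ = 0 := by simp [π, hx]
      exact hx0 ▸ step x.succ |>.trans (hx ▸ zero_p)
    · simpa [π, swap_apply_of_ne_of_ne (Fin.succ_ne_zero _) hx] using step x.succ
  obtain ⟨q, rfl⟩ := Fin.exists_succ_eq.2 hp
  have to_p (x : Fin (n + 1)) : π.SameCycle x q.succ := by
    refine Fin.cases zero_p (fun y => ?_) x
    exact SameCycle.map_of_sameCycle_apply succ_succ (isCycleOn_univ_iff.1 he y q)
  exact isCycleOn_univ_iff.2 fun x y => (to_p x).trans (to_p y).symm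

end Equiv.Perm

variable {n : ℕ}

theorem not_contains213_of_forall_succ {ρ : Perm (Fin (n + 1))} {σ : Perm (Fin n)}
    {φ : Fin n → Fin (n + 1)} (hφ : StrictMono φ) (hρ : ∀ x, ρ x.succ = φ (σ x))
    (h0 : ρ 0 = 0 ∨ ρ 0 = Fin.last n) (hσ : ¬ Contains213 σ) : ¬ Contains213 ρ := by
  rintro ⟨i₁, i₂, i₃, h₁₂, h₂₃, h₂₁, h₁₃⟩
  induction i₁ using Fin.cases with
  | zero => -- an extreme value cannot play the role of the `2`
    rcases h0 with h | h
    · exact Fin.not_lt_zero _ (h ▸ h₂₁)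
    · exact (Fin.le_last _).not_gt (h ▸ h₁₃)
  | succ j₁ =>
    obtain ⟨j₂, rfl⟩ := Fin.exists_succ_eq.2 ((Fin.succ_pos j₁).trans h₁₂).ne'
    obtain ⟨j₃, rfl⟩ := Fin.exists_succ_eq.2 ((Fin.succ_pos j₁).trans (h₁₂.trans h₂₃)).ne'
    rw [hρ, hρ, hφ.lt_iff_lt] at h₂₁ h₁₃
    exact hσ ⟨j₁, j₂, j₃, Fin.succ_lt_succ_iff.1 h₁₂, Fin.succ_lt_succ_iff.1 h₂₃, h₂₁, h₁₃⟩

theorem not_contains213_decomposeFin_symm_zero {σ : Perm (Fin n)} (hσ : ¬ Contains213 σ) :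
    ¬ Contains213 (decomposeFin.symm (0, σ)) :=
  not_contains213_of_forall_succ Fin.strictMono_succ (by simp) (by simp) hσ

theorem not_contains213_finRotate_inv_mul {σ : Perm (Fin n)} (hσ : ¬ Contains213 σ) :
    ¬ Contains213 ((finRotate (n + 1))⁻¹ * decomposeFin.symm (0, σ)) := by
  refine not_contains213_of_forall_succ Fin.strictMono_castSucc (fun x => ?_) ?_ hσ
  · rw [mul_apply, decomposeFin_symm_apply_succ, swap_self, refl_apply, inv_eq_iff_eq,
      finRotate_apply, Fin.coeSucc_eq_succ]
  · rw [mul_apply, decomposeFin_symm_apply_zero]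
    exact .inr (inv_eq_iff_eq.2 finRotate_last.symm)

theorem exists_not_contains213_isCycleOn_mul :
    ∀ {n : ℕ} (h : Perm (Fin n)), ∃ ρ, ¬ Contains213 ρ ∧ (h * ρ).IsCycleOn univ
  | 0, _ | 1, _ =>
    ⟨1, fun ⟨_, _, _, h₁₂, _⟩ => h₁₂.ne (Subsingleton.elim _ _), isCycleOn_of_subsingleton _ _⟩
  | n + 2, h => by
    have peel (τ : Perm (Fin (n + 2))) (hτ : (h * τ) 0 ≠ 0)
        (hτ213 : ∀ σ : Perm (Fin (n + 1)), ¬ Contains213 σ →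
          ¬ Contains213 (τ * decomposeFin.symm (0, σ))) :
        ∃ ρ, ¬ Contains213 ρ ∧ (h * ρ).IsCycleOn univ := by
      obtain ⟨⟨p, e⟩, he⟩ := decomposeFin.symm.surjective (h * τ)
      obtain ⟨σ, hσ, hcycle⟩ := exists_not_contains213_isCycleOn_mul e
      refine ⟨τ * decomposeFin.symm (0, σ), hτ213 σ hσ, ?_⟩
      rw [← he, decomposeFin_symm_apply_zero] at hτ
      rw [← mul_assoc, ← he, decomposeFin_symm_mul_decomposeFin_symm_zero]
      exact isCycleOn_univ_decomposeFin_symm hτ hcycle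
    by_cases h0 : h 0 = 0
    · refine peel (finRotate _)⁻¹ ?_ fun σ => not_contains213_finRotate_inv_mul
      have : (finRotate (n + 2))⁻¹ 0 = Fin.last _ := inv_eq_iff_eq.2 finRotate_last.symm
      rw [mul_apply, this, ← h0]
      exact h.injective.ne (Fin.last_pos.ne')
    · exact peel 1 (by simpa using h0) fun σ => by simpa using not_contains213_decomposeFin_symm_zero

theorem not_contains132_revPerm_mul_mul {ρ : Perm (Fin n)} (h : ¬ Contains213 ρ) :
    ¬ Contains132 (Fin.revPerm * ρ * Fin.revPerm) := by
  rintro ⟨i₁, i₂, i₃, h₁₂, h₂₃, h₁₃, h₃₂⟩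
  simp only [mul_apply, Fin.revPerm_apply, Fin.rev_lt_rev] at h₁₃ h₃₂
  exact h ⟨i₃.rev, i₂.rev, i₁.rev, Fin.rev_lt_rev.2 h₂₃, Fin.rev_lt_rev.2 h₁₂, h₃₂, h₁₃⟩

theorem exists_not_contains132_isCycleOn_mul (h : Perm (Fin n)) :
    ∃ ρ, ¬ Contains132 ρ ∧ (h * ρ).IsCycleOn univ := by
  set r : Perm (Fin n) := Fin.revPerm
  have r_inv : r⁻¹ = r := Fin.revPerm_symm
  obtain ⟨ρ, hρ, hcycle⟩ := exists_not_contains213_isCycleOn_mul (r * h * r)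
  refine ⟨r * ρ * r, not_contains132_revPerm_mul_mul hρ, ?_⟩
  have conj_eq : h * (r * ρ * r) = r * (r * h * r * ρ) * r⁻¹ := by
    have r_mul : r * r = 1 := r_inv ▸ mul_inv_cancel r
    rw [r_inv]
    simp only [← mul_assoc, r_mul, one_mul]
  rw [conj_eq, isCycleOn_univ_iff]
  exact fun x y => sameCycle_conj.2 (isCycleOn_univ_iff.1 hcycle _ _)

theorem stmt_7 (m : ℕ) (π₁ π₂ : Equiv.Perm (Fin m)) :
    ∃ ρ₁ ρ₂ α β : Equiv.Perm (Fin m), ¬ Contains213 ρ₁ ∧ ¬ Contains132 ρ₂ ∧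
      α * ρ₁ * β = π₁ ∧ α⁻¹ * ρ₂ * β⁻¹ = π₂ := by
  obtain ⟨ρ₁, hρ₁, hcycle₁⟩ := exists_not_contains213_isCycleOn_mul π₂⁻¹
  obtain ⟨ρ₂, hρ₂, hcycle₂⟩ := exists_not_contains132_isCycleOn_mul π₁⁻¹
  obtain ⟨γ, hγ⟩ := isConj_iff.1 (isConj_of_isCycleOn_univ hcycle₁ (isCycleOn_inv.2 hcycle₂))
  refine ⟨ρ₁, ρ₂, ρ₂ * γ * π₂⁻¹, γ⁻¹, hρ₁, hρ₂, ?_, by group⟩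
  calc ρ₂ * γ * π₂⁻¹ * ρ₁ * γ⁻¹ = ρ₂ * (γ * (π₂⁻¹ * ρ₁) * γ⁻¹) := by group
    _ = π₁ := by rw [hγ]; group
end
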